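/- arXiv:2412.15472 — 2 statements merged into one kernel-verified Lean document; each statement's English description precedes it below -/
import Mathlib

section
/- Let n ≥ 2 and let f : ℝ≥0 → ℝ ∪ {−∞} be a strictly increasing function that is continuous on ℝ>0. Then the following are equivalent: (a) for every positive-admitting identical-good instance with n agents, every allocation chosen by the additive welfarist rule with f is EF1; (b) there exist constants α ∈ ℝ>0 and β ∈ ℝ such that f(x) = α·log x + β for all x ∈ ℝ≥0 (with f(0) = −∞). -/
/-! With identical goods agent `i` values a bundle `S` at `aᵢ · |S|`. If `f = α log + β`, then
`f 0 = ⊥` forces a maximiser to give every agent a good, its welfare is `α log ∏ᵢ |Aᵢ|` up to a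
constant, and moving a good out of a bundle that is at least two goods larger than another raises
the product; so every maximiser is EF1.

Conversely, take `n (k + 1)` goods, valued at `b` each by agent `1` and at `a` by everyone else.
EF1 forces every maximiser to be balanced, so moving a good from agent `1` to agent `0` strictly
lowers the welfare: `Δₖ₊₁(a) < Δₖ(b)` for `Δₖ(x) = F((k + 1) x) - F(k x)`, `F = f` on `(0, ∞)`.
Splitting `Δₖ(x)` into `r` increments at scale `x / r` and comparing them with those of `Δₖ(y)`
shows that `Δₖ` is constant. Hence `F(q x) = F q + F x - F 1` for rational `q > 0`, by continuity
for real `q > 0`, so `t ↦ F(eᵗ) - F 1` is continuous and additive, hence linear. Finally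
`f 0 = ⊥`, as `f 0 < α log x + β` for all `x > 0`. -/

open scoped BigOperators

noncomputable section

namespace FairDiv

/-- The bundle of goods received by agent `i` under the assignment `A` of goods to agents. -/
def bundle {n m : ℕ} (A : Fin m → Fin n) (i : Fin n) : Finset (Fin m) :=
  Finset.univ.filter fun g => A g = i

/-- Additive utility of agent `i` for a set `S` of goods. -/
def util {n m : ℕ} (u : Fin n → Fin m → ℝ) (i : Fin n) (S : Finset (Fin m)) : ℝ :=
  ∑ g ∈ S, u i g

/-- Envy-freeness up to one good. -/
def EF1 {n m : ℕ} (u : Fin n → Fin m → ℝ) (A : Fin m → Fin n) : Prop :=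
  ∀ i j : Fin n, bundle A j ≠ ∅ →
    ∃ g ∈ bundle A j, util u i ((bundle A j).erase g) ≤ util u i (bundle A i)

/-- Welfare of an allocation under the additive welfarist rule with function `f`. -/
def welfare {n m : ℕ} (f : ℝ → EReal) (u : Fin n → Fin m → ℝ) (A : Fin m → Fin n) : EReal :=
  ∑ i : Fin n, f (util u i (bundle A i))

/-- An allocation is chosen by the additive welfarist rule with `f` if it maximizes welfare. -/
def Chosen {n m : ℕ} (f : ℝ → EReal) (u : Fin n → Fin m → ℝ) (A : Fin m → Fin n) : Prop :=
  ∀ B : Fin m → Fin n, welfare f u B ≤ welfare f u A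

/-- An instance is positive-admitting if some allocation gives everyone positive utility. -/
def PositiveAdmitting {n m : ℕ} (u : Fin n → Fin m → ℝ) : Prop :=
  ∃ B : Fin m → Fin n, ∀ i : Fin n, 0 < util u i (bundle B i)

def IdenticalGood {n m : ℕ} (u : Fin n → Fin m → ℝ) : Prop :=
  ∀ i : Fin n, ∃ a : ℝ, 0 < a ∧ ∀ g : Fin m, u i g = a

def TwoValue {n m : ℕ} (u : Fin n → Fin m → ℝ) : Prop :=
  ∃ a₁ a₂ : ℝ, a₁ ≠ a₂ ∧ 0 ≤ a₁ ∧ 0 ≤ a₂ ∧ ∀ i g, u i g = a₁ ∨ u i g = a₂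

def Normalized {n m : ℕ} (u : Fin n → Fin m → ℝ) : Prop :=
  ∀ i j : Fin n, util u i Finset.univ = util u j Finset.univ

def IntegerValued {n m : ℕ} (u : Fin n → Fin m → ℝ) : Prop :=
  ∀ i g, ∃ z : ℕ, u i g = (z : ℝ)

def Binary {n m : ℕ} (u : Fin n → Fin m → ℝ) : Prop :=
  ∀ i g, u i g = 0 ∨ u i g = 1

/-- `Δ_{f,k}(x) = f((k+1)x) − f(kx)`, valued in `EReal` (it is `+∞` iff `f(kx) = −∞`). -/
def Delta (f : ℝ → EReal) (k : ℕ) (x : ℝ) : EReal :=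
  f (((k : ℝ) + 1) * x) - f ((k : ℝ) * x)

/-- Condition 1: `Δ_{f,k}(b) > Δ_{f,k+1}(a)` for all `k ∈ ℤ≥0` and `a, b ∈ ℝ>0`. -/
def Cond1 (f : ℝ → EReal) : Prop :=
  ∀ k : ℕ, ∀ a b : ℝ, 0 < a → 0 < b → Delta f (k + 1) a < Delta f k b

/-- Condition 1a: `Δ_{f,k}` is constant on `ℝ>0` for every `k ∈ ℤ>0`. -/
def Cond1a (f : ℝ → EReal) : Prop :=
  ∀ k : ℕ, 0 < k → ∀ x y : ℝ, 0 < x → 0 < y → Delta f k x = Delta f k y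

/-- Condition 2. -/
def Cond2 (f : ℝ → EReal) : Prop :=
  ∀ a b c d : ℝ, 0 ≤ a → 0 ≤ b → 0 ≤ c → 0 ≤ d →
    min a b ≤ min c d → a * b < c * d → f a + f b < f c + f d

/-- Condition 3: `Δ_{f,k}(b) > Δ_{f,k+1}(a)` for all `k ∈ ℤ≥0` and `a, b ∈ ℤ>0`. -/
def Cond3 (f : ℝ → EReal) : Prop :=
  ∀ k : ℕ, ∀ a b : ℕ, 0 < a → 0 < b → Delta f (k + 1) (a : ℝ) < Delta f k (b : ℝ)

/-- Condition 3a. -/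
def Cond3a (f : ℝ → EReal) : Prop :=
  ∀ k l : ℕ, l < k → ∀ a b : ℕ, 0 < a → 0 < b → Delta f k (a : ℝ) < Delta f l (b : ℝ)

/-- Condition 3b: `Δ_{f,k}(1) > Δ_{f,k+1}(a) > Δ_{f,k+2}(1)` for `k ∈ ℤ≥0`, `a ∈ ℤ>0`. -/
def Cond3b (f : ℝ → EReal) : Prop :=
  ∀ k : ℕ, ∀ a : ℕ, 0 < a →
    Delta f (k + 1) (a : ℝ) < Delta f k 1 ∧ Delta f (k + 2) 1 < Delta f (k + 1) (a : ℝ)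

/-- Condition 4: `Δ_{f,k}(1) > Δ_{f,k+1}(1)` for all `k ∈ ℤ≥0`. -/
def Cond4 (f : ℝ → EReal) : Prop :=
  ∀ k : ℕ, Delta f (k + 1) 1 < Delta f k 1

/-- Condition 5. -/
def Cond5 (f : ℝ → EReal) : Prop :=
  ∀ a b k l r : ℕ, 0 < a → 0 < b → b ≤ a → l * b + r * a < (k + 1) * b →
    Delta f (k + 1) (a : ℝ) <
        f (((l : ℝ) + 1) * (b : ℝ) + (r : ℝ) * (a : ℝ)) - f ((l : ℝ) * (b : ℝ) + (r : ℝ) * (a : ℝ))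
      ∧ Delta f (k + 2) 1 < Delta f (k + 1) (a : ℝ)

/-- Condition 6a: `f((k+1)b−1) − f(kb−1) > Δ_{f,k}(a)` for all `k, a, b ∈ ℤ>0`. -/
def Cond6a (f : ℝ → EReal) : Prop :=
  ∀ k a b : ℕ, 0 < k → 0 < a → 0 < b →
    Delta f k (a : ℝ) < f (((k : ℝ) + 1) * (b : ℝ) - 1) - f ((k : ℝ) * (b : ℝ) - 1)

/-- Condition 6b: `f(y+b) − f(y) > f(x+a) − f(x)` whenever `x/a ≥ (y+1)/b`. -/
def Cond6b (f : ℝ → EReal) : Prop :=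
  ∀ a b : ℕ, ∀ x y : ℕ, 0 < a → 0 < b → ((y : ℝ) + 1) / (b : ℝ) ≤ (x : ℝ) / (a : ℝ) →
    f ((x : ℝ) + (a : ℝ)) - f (x : ℝ) < f ((y : ℝ) + (b : ℝ)) - f (y : ℝ)

/-- Modified logarithmic function `λ_c(x) = log (x + c)`, with `log 0 = −∞`. -/
def lam (c : ℝ) (x : ℝ) : EReal :=
  if x + c = 0 then ⊥ else ((Real.log (x + c) : ℝ) : EReal)

/-- The `p`-mean function `φ_p`, with `φ_p(0) = −∞` for `p ≤ 0`. -/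
def phi (p : ℝ) (x : ℝ) : EReal :=
  if 0 < p then ((x ^ p : ℝ) : EReal)
  else if x = 0 then ⊥
  else if p = 0 then ((Real.log x : ℝ) : EReal)
  else ((-(x ^ p) : ℝ) : EReal)

/-- Modified harmonic number `h_c` on nonnegative integers. -/
def hmod (c : ℝ) (x : ℕ) : EReal :=
  if c = -1 then
    (if x = 0 then (⊥ : EReal)
     else (((∑ t ∈ Finset.range (x - 1), (1 : ℝ) / ((t : ℝ) + 1)) : ℝ) : EReal))
  else (((∑ t ∈ Finset.range x, (1 : ℝ) / ((t : ℝ) + 1 + c)) : ℝ) : EReal)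

/-- Condition 3b for a function defined on nonnegative integers. -/
def Cond3bNat (f : ℕ → EReal) : Prop :=
  ∀ k : ℕ, ∀ a : ℕ, 0 < a →
    f ((k + 2) * a) - f ((k + 1) * a) < f (k + 1) - f k
    ∧ f (k + 3) - f (k + 2) < f ((k + 2) * a) - f ((k + 1) * a)

theorem _root_.EReal.coe_finset_sum {ι : Type*} (s : Finset ι) (g : ι → ℝ) :
    ((∑ i ∈ s, g i : ℝ) : EReal) = ∑ i ∈ s, (g i : EReal) :=
  map_sum (⟨⟨Real.toEReal, EReal.coe_zero⟩, EReal.coe_add⟩ : ℝ →+ EReal) g s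

open Finset Function Real Set

section Allocation

variable {n m : ℕ}

theorem util_eq_mul_card {u : Fin n → Fin m → ℝ} {i : Fin n} {a : ℝ} (hu : ∀ g, u i g = a)
    (S : Finset (Fin m)) : util u i S = a * #S := by
  simp [util, hu, mul_comm]

theorem sum_card_bundle (A : Fin m → Fin n) : ∑ i, #(bundle A i) = m := by
  simpa [bundle] using (card_eq_sum_card_fiberwise (f := A) (s := univ) (t := univ)
    fun g _ => mem_univ (A g)).symm

theorem card_bundle_update_self {A : Fin m → Fin n} {g : Fin m} {i : Fin n} (hg : A g ≠ i) :
    #(bundle (update A g i) i) = #(bundle A i) + 1 := by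
  have : bundle (update A g i) i = insert g (bundle A i) := by
    ext x
    by_cases hx : x = g <;> simp [bundle, update_apply, hx]
  rw [this, card_insert_of_notMem (by simpa [bundle] using hg)]

theorem bundle_update_of_ne {A : Fin m → Fin n} {g : Fin m} {i l : Fin n} (hli : l ≠ i) :
    bundle (update A g i) l = (bundle A l).erase g := by
  ext x
  by_cases hx : x = g <;> simp [bundle, update_apply, hx, hli.symm]

theorem card_bundle_update_of_eq {A : Fin m → Fin n} {g : Fin m} {i j : Fin n} (hg : A g = j)
    (hij : i ≠ j) : #(bundle (update A g i) j) = #(bundle A j) - 1 := by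
  rw [bundle_update_of_ne hij.symm, card_erase_of_mem (by simpa [bundle] using hg)]

theorem card_bundle_update_of_ne {A : Fin m → Fin n} {g : Fin m} {i l : Fin n} (hli : l ≠ i)
    (hlg : l ≠ A g) : #(bundle (update A g i) l) = #(bundle A l) := by
  rw [bundle_update_of_ne hli, erase_eq_of_notMem (by simpa [bundle] using hlg.symm)]

theorem card_bundle_update_pos {A : Fin m → Fin n} {g : Fin m} {i j : Fin n} (hg : A g = j)
    (hij : i ≠ j) (hA : ∀ l, 0 < #(bundle A l)) (hj : 2 ≤ #(bundle A j)) (l : Fin n) :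
    0 < #(bundle (update A g i) l) := by
  by_cases hli : l = i
  · rw [hli, card_bundle_update_self (hg ▸ hij.symm)]
    omega
  by_cases hlj : l = j
  · rw [hlj, card_bundle_update_of_eq hg hij]
    omega
  rw [card_bundle_update_of_ne hli (hg ▸ hlj)]
  exact hA l

theorem sum_card_bundle_update (φ : Fin n → ℕ → ℝ) {A : Fin m → Fin n} {g : Fin m} {i j : Fin n}
    (hg : A g = j) (hij : i ≠ j) :
    ∑ l, φ l #(bundle (update A g i) l) = ∑ l, φ l #(bundle A l)
      + (φ i (#(bundle A i) + 1) - φ i #(bundle A i))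
      + (φ j (#(bundle A j) - 1) - φ j #(bundle A j)) := by
  have h := Fintype.sum_eq_add
    (f := fun l => φ l #(bundle (update A g i) l) - φ l #(bundle A l)) i j hij
    fun l ⟨hli, hlj⟩ => by simp only [card_bundle_update_of_ne hli (hg ▸ hlj), sub_self]
  rw [sum_sub_distrib, card_bundle_update_self (hg ▸ hij.symm),
    card_bundle_update_of_eq hg hij] at h
  linarith

theorem EF1_iff_card_le {u : Fin n → Fin m → ℝ} {a : Fin n → ℝ} (ha : ∀ i, 0 < a i)
    (hu : ∀ i g, u i g = a i) (A : Fin m → Fin n) :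
    EF1 u A ↔ ∀ i j, bundle A j ≠ ∅ → #(bundle A j) ≤ #(bundle A i) + 1 := by
  have key : ∀ i j g, g ∈ bundle A j → (util u i ((bundle A j).erase g) ≤ util u i (bundle A i)
      ↔ #(bundle A j) ≤ #(bundle A i) + 1) := by
    intro i j g hg
    rw [util_eq_mul_card (hu i), util_eq_mul_card (hu i), mul_le_mul_iff_right₀ (ha i),
      card_erase_of_mem hg, Nat.cast_le]
    have := card_pos.2 ⟨g, hg⟩
    omega
  refine forall₂_congr fun i j => imp_congr_right fun hne => ?_
  obtain ⟨g, hg⟩ := nonempty_iff_ne_empty.2 hne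
  exact ⟨fun ⟨g', hg', h⟩ => (key i j g' hg').1 h, fun h => ⟨g, hg, (key i j g hg).2 h⟩⟩

theorem eq_of_forall_le_add_one {s : ℕ} (hs : 2 ≤ s) {k : Fin n → ℕ} (hsum : ∑ i, k i = n * s)
    (hk : ∀ i j, k j ≠ 0 → k j ≤ k i + 1) (i : Fin n) : k i = s := by
  have hnz : ∀ i, k i ≠ 0 := by
    intro i₀ h₀
    have : ∑ j, k j ≤ ∑ _j : Fin n, 1 := sum_le_sum fun j _ => by
      by_cases hj : k j = 0
      · omega
      · have := hk i₀ j hj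
        omega
    simp only [sum_const, card_univ, Fintype.card_fin, smul_eq_mul, mul_one] at this
    have := i₀.pos
    nlinarith
  rcases lt_trichotomy (k i) s with hlt | heq | hgt
  · have : ∑ j, k j < ∑ _j : Fin n, s :=
      sum_lt_sum (fun j _ => by have := hk i j (hnz j); omega) ⟨i, mem_univ _, hlt⟩
    simp only [sum_const, card_univ, Fintype.card_fin, smul_eq_mul] at this
    omega
  · exact heq
  · have : ∑ _j : Fin n, s < ∑ j, k j :=
      sum_lt_sum (fun j _ => by have := hk j i (hnz i); omega) ⟨i, mem_univ _, hgt⟩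
    simp only [sum_const, card_univ, Fintype.card_fin, smul_eq_mul] at this
    omega

theorem card_bundle_eq_of_EF1 {s : ℕ} {u : Fin n → Fin (n * s) → ℝ} {a : Fin n → ℝ}
    (ha : ∀ i, 0 < a i) (hu : ∀ i g, u i g = a i) (hs : 2 ≤ s) {A : Fin (n * s) → Fin n}
    (hA : EF1 u A) (i : Fin n) : #(bundle A i) = s :=
  eq_of_forall_le_add_one hs (sum_card_bundle A) (fun i j hj =>
    (EF1_iff_card_le ha hu A).1 hA i j (card_ne_zero.1 hj).ne_empty) i

theorem positiveAdmitting_of_le {u : Fin n → Fin m → ℝ} (hu : ∀ i g, 0 < u i g) (hn : 0 < n)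
    (hnm : n ≤ m) : PositiveAdmitting u := by
  refine ⟨fun g => ⟨g % n, Nat.mod_lt _ hn⟩, fun i =>
    sum_pos (fun g _ => hu i g) ⟨⟨i, i.2.trans_le hnm⟩, ?_⟩⟩
  simp [bundle, Fin.ext_iff, Nat.mod_eq_of_lt i.2]

theorem welfare_eq_coe_sum {f : ℝ → EReal} {F : ℝ → ℝ} (hfF : ∀ x, 0 < x → f x = F x)
    {u : Fin n → Fin m → ℝ} {a : Fin n → ℝ} (ha : ∀ i, 0 < a i) (hu : ∀ i g, u i g = a i)
    {A : Fin m → Fin n} (hA : ∀ i, 0 < #(bundle A i)) :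
    welfare f u A = ↑(∑ i, F (a i * #(bundle A i))) := by
  rw [welfare, EReal.coe_finset_sum]
  refine sum_congr rfl fun i _ => ?_
  rw [util_eq_mul_card (hu i)]
  exact hfF _ (mul_pos (ha i) (by exact_mod_cast hA i))

theorem welfare_eq_bot {f : ℝ → EReal} (hf0 : f 0 = ⊥) {u : Fin n → Fin m → ℝ}
    {A : Fin m → Fin n} {i : Fin n} (hi : bundle A i = ∅) : welfare f u A = ⊥ := by
  rw [welfare, ← add_sum_erase _ _ (mem_univ i), hi]
  simp [util, hf0]

end Allocation

section LogCharacterization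

def realDelta (F : ℝ → ℝ) (k : ℕ) (x : ℝ) : ℝ := F ((k + 1) * x) - F (k * x)

theorem sub_eq_sum_realDelta (F : ℝ → ℝ) (p r : ℕ) (z : ℝ) :
    F ((p + r) * z) - F (p * z) = ∑ t ∈ range r, realDelta F (p + t) z := by
  induction r with
  | zero => simp
  | succ r ih =>
    rw [sum_range_succ, ← ih, realDelta]
    push_cast
    ring_nf

variable {F : ℝ → ℝ}

theorem realDelta_pos (hmono : StrictMonoOn F (Ioi 0)) {k : ℕ} (hk : 1 ≤ k) {x : ℝ}
    (hx : 0 < x) : 0 < realDelta F k x := by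
  have hk' : (1 : ℝ) ≤ k := by exact_mod_cast hk
  exact sub_pos.2 (hmono (mem_Ioi.2 (by positivity)) (mem_Ioi.2 (by positivity)) (by nlinarith))

theorem realDelta_lt_realDelta
    (hdelta : ∀ k, 1 ≤ k → ∀ a b, 0 < a → 0 < b → realDelta F (k + 1) a < realDelta F k b)
    {k l : ℕ} (hk : 1 ≤ k) (hkl : k < l) {x y : ℝ} (hx : 0 < x) (hy : 0 < y) :
    realDelta F l x < realDelta F k y := by
  induction l, hkl using Nat.le_induction with
  | base => exact hdelta k hk x y hx hy
  | succ l hkl ih => exact (hdelta l (by omega) x x hx hx).trans ih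

theorem mul_realDelta_lt
    (hdelta : ∀ k, 1 ≤ k → ∀ a b, 0 < a → 0 < b → realDelta F (k + 1) a < realDelta F k b)
    {K j : ℕ} (hK : 1 ≤ K) (hj : 2 * K ≤ j) {z : ℝ} (hz : 0 < z) :
    K * realDelta F j z < F 2 - F 1 := by
  have hK' : (K : ℝ) ≠ 0 := by positivity
  calc K * realDelta F j z = ∑ _t ∈ range K, realDelta F j z := by simp
    _ < ∑ t ∈ range K, realDelta F (K + t) (1 / K) :=
      sum_lt_sum_of_nonempty (nonempty_range_iff.2 (by omega)) fun t ht =>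
        realDelta_lt_realDelta hdelta (by omega) (by simp at ht; omega) hz (by positivity)
    _ = F 2 - F 1 := by
      rw [← sub_eq_sum_realDelta]
      congr 2 <;> field_simp
      ring

theorem realDelta_lt_realDelta_add (hmono : StrictMonoOn F (Ioi 0))
    (hdelta : ∀ k, 1 ≤ k → ∀ a b, 0 < a → 0 < b → realDelta F (k + 1) a < realDelta F k b)
    {k K : ℕ} (hk : 1 ≤ k) (hK : 1 ≤ K) {x y : ℝ} (hx : 0 < x) (hy : 0 < y) :
    realDelta F k x < realDelta F k y + (F 2 - F 1) / K := by
  obtain ⟨q, hq⟩ : ∃ q, 2 * K = q + 1 := ⟨2 * K - 1, by omega⟩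
  have hsub : ∀ w, realDelta F k w =
      ∑ t ∈ range (q + 1), realDelta F ((q + 1) * k + t) (w / (q + 1)) := by
    intro w
    rw [← sub_eq_sum_realDelta, realDelta]
    push_cast
    congr 2 <;> field_simp
  have hxq : 0 < x / (q + 1) := by positivity
  have hyq : 0 < y / (q + 1) := by positivity
  have hqk : 2 * K ≤ (q + 1) * k := hq ▸ Nat.le_mul_of_pos_right _ hk
  rw [hsub x, hsub y, sum_range_succ', sum_range_succ, add_zero]
  -- increment `t + 1` of `Δₖ(x)` lies below increment `t` of `Δₖ(y)`; the leftover first is small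
  have hmid : ∑ t ∈ range q, realDelta F ((q + 1) * k + (t + 1)) (x / (q + 1))
      ≤ ∑ t ∈ range q, realDelta F ((q + 1) * k + t) (y / (q + 1)) :=
    sum_le_sum fun t _ => (realDelta_lt_realDelta hdelta (by nlinarith) (by omega) hxq hyq).le
  have hlast := realDelta_pos hmono (k := (q + 1) * k + q) (by nlinarith) hyq
  have hfirst : realDelta F ((q + 1) * k) (x / (q + 1)) < (F 2 - F 1) / K := by
    rw [lt_div_iff₀' (by positivity)]
    exact mul_realDelta_lt hdelta hK hqk hxq
  linarith

theorem realDelta_eq_realDelta (hmono : StrictMonoOn F (Ioi 0))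
    (hdelta : ∀ k, 1 ≤ k → ∀ a b, 0 < a → 0 < b → realDelta F (k + 1) a < realDelta F k b)
    {k : ℕ} (hk : 1 ≤ k) {x y : ℝ} (hx : 0 < x) (hy : 0 < y) :
    realDelta F k x = realDelta F k y := by
  have hC : 0 < F 2 - F 1 := sub_pos.2 (hmono (mem_Ioi.2 one_pos) (mem_Ioi.2 two_pos) one_lt_two)
  have hle : ∀ x y, 0 < x → 0 < y → realDelta F k x ≤ realDelta F k y := by
    refine fun x y hx hy => le_of_forall_pos_lt_add fun ε hε => ?_
    obtain ⟨K, hK⟩ := exists_nat_gt ((F 2 - F 1) / ε)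
    have hK0 : (0 : ℝ) < K := (div_pos hC hε).trans hK
    calc realDelta F k x < realDelta F k y + (F 2 - F 1) / K :=
          realDelta_lt_realDelta_add hmono hdelta hk (by exact_mod_cast hK0) hx hy
      _ < realDelta F k y + ε := by
          rw [div_lt_iff₀ hε] at hK
          gcongr
          rwa [div_lt_iff₀ hK0, mul_comm]
  exact (hle x y hx hy).antisymm (hle y x hy hx)

theorem sub_eq_sub_of_natCast_mul
    (hconst : ∀ k, 1 ≤ k → ∀ x, 0 < x → realDelta F k x = realDelta F k 1)
    {N : ℕ} (hN : 0 < N) {x : ℝ} (hx : 0 < x) : F (N * x) - F x = F N - F 1 := by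
  obtain ⟨M, rfl⟩ : ∃ M, N = 1 + M := ⟨N - 1, by omega⟩
  have h := sub_eq_sum_realDelta F 1 M x
  rw [sum_congr rfl fun t _ => hconst (1 + t) (by omega) x hx, ← sub_eq_sum_realDelta] at h
  push_cast
  simpa using h

theorem map_ratCast_mul
    (hconst : ∀ k, 1 ≤ k → ∀ x, 0 < x → realDelta F k x = realDelta F k 1)
    {q : ℚ} (hq : 0 < q) {x : ℝ} (hx : 0 < x) : F (q * x) = F q + F x - F 1 := by
  obtain ⟨p, hp⟩ := Int.eq_ofNat_of_zero_le (Rat.num_nonneg.2 hq.le)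
  have hp0 : 0 < p := by have := Rat.num_pos.2 hq; omega
  have hd : (0 : ℝ) < q.den := by exact_mod_cast q.den_pos
  have hcast : (q : ℝ) = p * (1 / q.den) := by
    rw [Rat.cast_def, hp]
    push_cast
    ring
  have key : ∀ w, 0 < w → F (q * w) = F p - F q.den + F w := by
    intro w hw
    have h₁ := sub_eq_sub_of_natCast_mul hconst hp0 (x := w / q.den) (by positivity)
    have h₂ := sub_eq_sub_of_natCast_mul hconst q.den_pos (x := w / q.den) (by positivity)
    rw [mul_div_cancel₀ _ hd.ne'] at h₂
    rw [hcast, mul_assoc, one_div_mul_eq_div]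
    linarith
  have := key 1 one_pos
  rw [mul_one] at this
  rw [key x hx, this]
  ring

theorem map_mul_of_realDelta_const (hcont : ContinuousOn F (Ioi 0))
    (hconst : ∀ k, 1 ≤ k → ∀ x, 0 < x → realDelta F k x = realDelta F k 1)
    {x y : ℝ} (hx : 0 < x) (hy : 0 < y) : F (x * y) = F x + F y - F 1 := by
  refine Set.EqOn.of_subset_closure (f := fun x => F (x * y)) (g := fun x => F x + F y - F 1)
    (s := Ioi 0 ∩ range ((↑) : ℚ → ℝ)) ?_ ?_ ?_ inter_subset_left
    (Rat.denseRange_cast.open_subset_closure_inter isOpen_Ioi) hx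
  · rintro _ ⟨hq, q, rfl⟩
    exact map_ratCast_mul hconst (Rat.cast_pos.1 (mem_Ioi.1 hq)) hy
  · exact hcont.comp (continuousOn_id.mul continuousOn_const) fun x hx => mul_pos hx hy
  · exact (hcont.add continuousOn_const).sub continuousOn_const

theorem eq_mul_log_add_of_realDelta_lt (hmono : StrictMonoOn F (Ioi 0))
    (hcont : ContinuousOn F (Ioi 0))
    (hdelta : ∀ k, 1 ≤ k → ∀ a b, 0 < a → 0 < b → realDelta F (k + 1) a < realDelta F k b)
    {x : ℝ} (hx : 0 < x) : F x = (F (exp 1) - F 1) * log x + F 1 := by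
  have hconst : ∀ k, 1 ≤ k → ∀ x, 0 < x → realDelta F k x = realDelta F k 1 :=
    fun k hk x hx => realDelta_eq_realDelta hmono hdelta hk hx one_pos
  let G : ℝ →+ ℝ := AddMonoidHom.mk' (fun t => F (exp t) - F 1) fun s t => by
    simp only [exp_add, map_mul_of_realDelta_const hcont hconst (exp_pos s) (exp_pos t)]
    ring
  have hG : Continuous G := (hcont.comp_continuous continuous_exp exp_pos).sub continuous_const
  have := map_real_smul G hG (log x) 1
  simp only [G, AddMonoidHom.mk'_apply, smul_eq_mul, mul_one, exp_log hx] at this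
  linarith

end LogCharacterization

theorem log_mul_add_log_mul_lt {x y : ℝ} (hx : 0 < x) (hy : 0 < y) {k l : ℕ} (hk : 0 < k)
    (hkl : k + 2 ≤ l) :
    log (x * k) + log (y * l) < log (x * ↑(k + 1)) + log (y * ↑(l - 1)) := by
  have hk' : (0 : ℝ) < k := by exact_mod_cast hk
  have hkl' : (k : ℝ) + 2 ≤ l := by exact_mod_cast hkl
  rw [Nat.cast_sub (by omega), Nat.cast_add_one, Nat.cast_one,
    ← log_mul (mul_pos hx hk').ne' (mul_pos hy (by linarith)).ne',
    ← log_mul (mul_pos hx (by linarith)).ne' (mul_pos hy (by linarith)).ne']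
  apply log_lt_log (mul_pos (mul_pos hx hk') (mul_pos hy (by linarith)))
  have hxy := mul_pos hx hy
  nlinarith

theorem EF1_of_chosen_of_eq_log {n m : ℕ} {f : ℝ → EReal} {α β : ℝ} (hα : 0 < α) (hf0 : f 0 = ⊥)
    (hf : ∀ x, 0 < x → f x = ↑(α * log x + β)) {u : Fin n → Fin m → ℝ} (hig : IdenticalGood u)
    (hpa : PositiveAdmitting u) {A : Fin m → Fin n} (hA : Chosen f u A) : EF1 u A := by
  choose a ha hu using hig
  obtain ⟨B, hB⟩ := hpa
  have hBpos : ∀ i, 0 < #(bundle B i) := fun i => by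
    have := hB i
    rw [util_eq_mul_card (hu i)] at this
    exact_mod_cast pos_of_mul_pos_right this (ha i).le
  have hApos : ∀ i, 0 < #(bundle A i) := by
    intro i
    rw [card_pos, Finset.nonempty_iff_ne_empty]
    intro hi
    have := hA B
    rw [welfare_eq_bot hf0 hi, welfare_eq_coe_sum hf ha hu hBpos] at this
    exact EReal.coe_ne_bot _ (le_bot_iff.1 this)
  refine (EF1_iff_card_le ha hu A).2 fun i j _ => ?_
  by_contra! hij
  have hne : i ≠ j := by
    rintro rfl
    omega
  obtain ⟨g, hg⟩ := card_pos.1 (hApos j)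
  have hgA : A g = j := (mem_filter.1 hg).2
  have hle := hA (update A g i)
  rw [welfare_eq_coe_sum hf ha hu (card_bundle_update_pos hgA hne hApos (by omega)),
    welfare_eq_coe_sum hf ha hu hApos, EReal.coe_le_coe_iff,
    sum_card_bundle_update (fun l c => α * log (a l * c) + β) hgA hne] at hle
  have := mul_lt_mul_of_pos_left (log_mul_add_log_mul_lt (ha i) (ha j) (hApos i)
    (by omega : #(bundle A i) + 2 ≤ #(bundle A j))) hα
  linarith

theorem realDelta_lt_of_EF1 {n : ℕ} (hn : 2 ≤ n) {f : ℝ → EReal} {F : ℝ → ℝ}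
    (hfF : ∀ x, 0 < x → f x = F x)
    (hEF1 : ∀ m : ℕ, ∀ u : Fin n → Fin m → ℝ, (∀ i g, 0 ≤ u i g) →
        IdenticalGood u → PositiveAdmitting u →
        ∀ A : Fin m → Fin n, Chosen f u A → EF1 u A)
    {k : ℕ} (hk : 1 ≤ k) {a b : ℝ} (ha : 0 < a) (hb : 0 < b) :
    realDelta F (k + 1) a < realDelta F k b := by
  let i₀ : Fin n := ⟨0, by omega⟩
  let i₁ : Fin n := ⟨1, by omega⟩
  have h01 : i₀ ≠ i₁ := by simp [i₀, i₁, Fin.ext_iff]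
  let v : Fin n → ℝ := fun i => if i = i₁ then b else a
  have hv : ∀ i, 0 < v i := fun i => by dsimp only [v]; split_ifs <;> assumption
  let u : Fin n → Fin (n * (k + 1)) → ℝ := fun i _ => v i
  have hu : ∀ i g, u i g = v i := fun _ _ => rfl
  have hpa : PositiveAdmitting u := positiveAdmitting_of_le (fun i _ => hv i) (by omega)
    (Nat.le_mul_of_pos_right n (by omega))
  have hEF1u : ∀ A, Chosen f u A → EF1 u A :=
    hEF1 _ u (fun i _ => (hv i).le) (fun i => ⟨v i, hv i, hu i⟩) hpa
  have : Nonempty (Fin n) := ⟨i₀⟩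
  obtain ⟨A, hA⟩ := Finite.exists_max (welfare f u)
  have hcard := card_bundle_eq_of_EF1 hv hu (by omega) (hEF1u A hA)
  have hApos : ∀ i, 0 < #(bundle A i) := fun i => by rw [hcard]; omega
  obtain ⟨g, hg⟩ := card_pos.1 (hApos i₁)
  have hgA : A g = i₁ := (mem_filter.1 hg).2
  have hBnot : ¬ Chosen f u (update A g i₀) := fun hB => by
    have := card_bundle_eq_of_EF1 hv hu (by omega) (hEF1u _ hB) i₀
    rw [card_bundle_update_self (hgA ▸ h01.symm), hcard] at this
    omega
  have hlt : welfare f u (update A g i₀) < welfare f u A := by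
    obtain ⟨C, hC⟩ := not_forall.1 hBnot
    exact (not_le.1 hC).trans_le (hA C)
  rw [welfare_eq_coe_sum hfF hv hu (card_bundle_update_pos hgA h01 hApos (by rw [hcard]; omega)),
    welfare_eq_coe_sum hfF hv hu hApos, EReal.coe_lt_coe_iff,
    sum_card_bundle_update (fun l c => F (v l * c)) hgA h01, hcard i₀, hcard i₁] at hlt
  have hv₀ : v i₀ = a := if_neg h01
  have hv₁ : v i₁ = b := if_pos rfl
  rw [hv₀, hv₁] at hlt
  simp only [realDelta]
  push_cast at hlt ⊢
  ring_nf at hlt ⊢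
  linarith

theorem eq_bot_of_lt_mul_log_add {c : EReal} (hc : c ≠ ⊤) {α β : ℝ} (hα : 0 < α)
    (h : ∀ x, 0 < x → c < ↑(α * log x + β)) : c = ⊥ := by
  induction c using EReal.rec with
  | bot => rfl
  | coe c =>
    have := h (exp ((c - β) / α)) (exp_pos _)
    rw [log_exp, mul_div_cancel₀ _ hα.ne', EReal.coe_lt_coe_iff] at this
    linarith
  | top => exact absurd rfl hc

theorem real_idengood (n : ℕ) (hn : 2 ≤ n) (f : ℝ → EReal)
    (hfmono : StrictMonoOn f (Set.Ici (0 : ℝ)))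
    (hftop : ∀ x : ℝ, 0 ≤ x → f x ≠ ⊤)
    (hfcont : ContinuousOn f (Set.Ioi (0 : ℝ))) :
    (∀ m : ℕ, ∀ u : Fin n → Fin m → ℝ, (∀ i g, 0 ≤ u i g) →
        IdenticalGood u → PositiveAdmitting u →
        ∀ A : Fin m → Fin n, Chosen f u A → EF1 u A)
    ↔ (∃ α β : ℝ, 0 < α ∧ f 0 = ⊥ ∧
        ∀ x : ℝ, 0 < x → f x = ((α * Real.log x + β : ℝ) : EReal)) := by
  constructor
  · intro hEF1
    have hf0 : ∀ x, 0 < x → f 0 < f x := fun x hx => hfmono self_mem_Ici hx.le hx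
    set F : ℝ → ℝ := fun x => (f x).toReal
    have hfF : ∀ x, 0 < x → f x = F x := fun x hx =>
      (EReal.coe_toReal (hftop x hx.le) (ne_bot_of_gt (hf0 x hx))).symm
    have hFmono : StrictMonoOn F (Ioi 0) := fun x hx y hy hxy => by
      rw [← EReal.coe_lt_coe_iff, ← hfF x hx, ← hfF y hy]
      exact hfmono (mem_Ici.2 (le_of_lt hx)) (mem_Ici.2 (le_of_lt hy)) hxy
    have hFcont : ContinuousOn F (Ioi 0) := EReal.continuousOn_toReal.comp hfcont fun x hx => by
      simp [ne_bot_of_gt (hf0 x hx), hftop x (le_of_lt hx)]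
    have hF : ∀ x, 0 < x → F x = (F (exp 1) - F 1) * log x + F 1 := fun x =>
      eq_mul_log_add_of_realDelta_lt hFmono hFcont fun k hk a b ha hb =>
        realDelta_lt_of_EF1 hn hfF hEF1 hk ha hb
    have hα : 0 < F (exp 1) - F 1 :=
      sub_pos.2 (hFmono (mem_Ioi.2 one_pos) (mem_Ioi.2 (exp_pos 1)) (one_lt_exp_iff.2 one_pos))
    refine ⟨_, F 1, hα, eq_bot_of_lt_mul_log_add (β := F 1) (hftop 0 le_rfl) hα fun x hx => ?_,
      fun x hx => by rw [hfF x hx, hF x hx]⟩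
    rw [← hF x hx, ← hfF x hx]
    exact hf0 x hx
  · rintro ⟨α, β, hα, hf0, hf⟩ m u - hig hpa A hA
    exact EF1_of_chosen_of_eq_log hα hf0 hf hig hpa hA

end FairDiv
end
end

section
/- Let n ≥ 2 and let f : ℝ≥0 → ℝ ∪ {−∞} be a strictly increasing function such that for every positive-admitting integer-valued instance with n agents, every allocation chosen by the additive welfarist rule with f is EF1. Then f satisfies Condition 6a. -/
open scoped BigOperators

noncomputable section

namespace FairDiv

/-!
Take `2k` big goods worth `a` to agent `0` and `b` to agent `1`, `b - 1` small goods worth `1`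
to agent `1` only, and one private good worth `1` for each further agent. Giving agent `0` exactly
`k + 1` big goods, agent `1` the rest, and every other agent its private good is not EF1: agent `1`
values agent `0`'s bundle minus any good at `kb > kb - 1`. In an EF1 allocation, on the other hand,
neither agent `0` nor agent `1` gets more than `k` big goods, so their utilities are at most `ka`
and `(k + 1)b - 1`. A welfare maximiser is EF1, hence strictly beats the first allocation, and
cancelling the private goods' terms leaves `f((k+1)a) + f(kb-1) < f(ka) + f((k+1)b-1)`.
-/

open Finset

section Utility

variable {n m : ℕ} {u : Fin n → Fin m → ℝ}

lemma mem_bundle {A : Fin m → Fin n} {g : Fin m} {i : Fin n} : g ∈ bundle A i ↔ A g = i := by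
  simp [bundle]

lemma util_nonneg (hu : ∀ i g, 0 ≤ u i g) (i : Fin n) (S : Finset (Fin m)) : 0 ≤ util u i S :=
  sum_nonneg fun g _ => hu i g

lemma util_mono (hu : ∀ i g, 0 ≤ u i g) (i : Fin n) {S S' : Finset (Fin m)} (h : S ⊆ S') :
    util u i S ≤ util u i S' :=
  sum_le_sum_of_subset_of_nonneg h fun g _ _ => hu i g

lemma util_erase (i : Fin n) {S : Finset (Fin m)} {g : Fin m} (hg : g ∈ S) :
    util u i (S.erase g) = util u i S - u i g := by
  rw [util, util, ← sum_erase_add S (u i) hg, add_sub_cancel_right]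

lemma util_pos_of_mem (hu : ∀ i g, 0 ≤ u i g) {i : Fin n} {S : Finset (Fin m)} {g : Fin m}
    (hg : g ∈ S) (hpos : 0 < u i g) : 0 < util u i S :=
  hpos.trans_le (single_le_sum (fun g _ => hu i g) hg)

variable {i : Fin n} {T : Finset (Fin m)} {c : ℝ}

lemma util_eq_card_mul (hT : ∀ g ∈ T, u i g = c) : util u i T = #T * c := by
  rw [util, sum_congr rfl hT, sum_const, nsmul_eq_mul]

lemma card_inter_mul_le_util (hu : ∀ i g, 0 ≤ u i g) (hT : ∀ g ∈ T, u i g = c)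
    (S : Finset (Fin m)) : #(S ∩ T) * c ≤ util u i S := by
  rw [← util_eq_card_mul fun g hg => hT g (mem_inter.mp hg).2]
  exact util_mono hu i inter_subset_left

lemma util_le_card_inter_mul_add (hu : ∀ i g, 0 ≤ u i g) (hT : ∀ g ∈ T, u i g = c)
    (S : Finset (Fin m)) : util u i S ≤ #(S ∩ T) * c + util u i Tᶜ := by
  rw [util, ← sum_inter_add_sum_sdiff S T, ← util, ← util,
    util_eq_card_mul fun g hg => hT g (mem_inter.mp hg).2]
  gcongr
  exact util_mono hu i fun g hg => mem_compl.mpr (mem_sdiff.mp hg).2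

end Utility

/-- Otherwise agent `j` holds at most `k - 1` goods of `T` and envies `i` even after any
removal. -/
lemma EF1.card_bundle_inter_le {n m k : ℕ} {u : Fin n → Fin m → ℝ} {A : Fin m → Fin n}
    (hA : EF1 u A) (hu : ∀ i g, 0 ≤ u i g) {i j : Fin n} (hij : i ≠ j) {T : Finset (Fin m)}
    {c : ℝ} (hT : #T ≤ 2 * k) (hjT : ∀ g ∈ T, u j g = c) (hjTc : util u j Tᶜ < c) :
    #(bundle A i ∩ T) ≤ k := by
  by_contra! hi
  have hj : #(bundle A j ∩ T) + 1 ≤ k := by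
    have hdisj : Disjoint (bundle A i ∩ T) (bundle A j ∩ T) :=
      disjoint_left.mpr fun g hgi hgj => hij <|
        (mem_bundle.mp (mem_inter.mp hgi).1).symm.trans (mem_bundle.mp (mem_inter.mp hgj).1)
    have : #(bundle A i ∩ T ∪ bundle A j ∩ T) ≤ #T :=
      card_le_card (union_subset inter_subset_right inter_subset_right)
    rw [card_union_of_disjoint hdisj] at this
    omega
  obtain ⟨g₀, hg₀⟩ := card_pos.mp (by omega : 0 < #(bundle A i ∩ T))
  obtain ⟨g, hg, henvy⟩ := hA j i (ne_empty_of_mem (mem_inter.mp hg₀).1)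
  have hc : 0 < c := (util_nonneg hu j _).trans_lt hjTc
  have hbelow : k * c ≤ util u j ((bundle A i).erase g) := by
    refine le_trans ?_ (card_inter_mul_le_util hu hjT _)
    have : k ≤ #((bundle A i).erase g ∩ T) := by
      rw [erase_inter]
      exact (Nat.le_sub_one_of_lt hi).trans pred_card_le_card_erase
    gcongr
  have habove : util u j (bundle A j) < k * c := calc
    util u j (bundle A j) ≤ #(bundle A j ∩ T) * c + util u j Tᶜ :=
      util_le_card_inter_mul_add hu hjT _
    _ < (#(bundle A j ∩ T) + 1) * c := by linarith
    _ ≤ k * c := by gcongr; exact_mod_cast hj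
  linarith

section Relabel

variable {n : ℕ} {G : Type*} [Fintype G]

def finUtil (v : Fin n → G → ℝ) : Fin n → Fin (Fintype.card G) → ℝ :=
  fun i g => v i ((Fintype.equivFin G).symm g)

def finAlloc (B : G → Fin n) : Fin (Fintype.card G) → Fin n :=
  fun g => B ((Fintype.equivFin G).symm g)

lemma util_finUtil_filter (v : Fin n → G → ℝ) (i : Fin n) (p : G → Prop) [DecidablePred p] :
    util (finUtil v) i (univ.filter fun g => p ((Fintype.equivFin G).symm g))
      = ∑ x, if p x then v i x else 0 := by
  rw [util, sum_filter]
  exact (Fintype.equivFin G).symm.sum_comp fun x => if p x then v i x else 0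

lemma util_finUtil_bundle (v : Fin n → G → ℝ) (i j : Fin n) (B : G → Fin n) :
    util (finUtil v) i (bundle (finAlloc B) j) = ∑ x, if B x = j then v i x else 0 :=
  util_finUtil_filter v i fun x => B x = j

lemma util_finUtil_univ (v : Fin n → G → ℝ) (i : Fin n) :
    util (finUtil v) i univ = ∑ x, v i x :=
  (Fintype.equivFin G).symm.sum_comp (v i)

lemma util_finUtil_bundle_pos {v : Fin n → G → ℝ} (hv : ∀ i x, 0 ≤ v i x) {B : G → Fin n}
    {i : Fin n} {x : G} (hx : B x = i) (hpos : 0 < v i x) :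
    0 < util (finUtil v) i (bundle (finAlloc B) i) :=
  util_pos_of_mem (fun i g => hv i _) (g := Fintype.equivFin G x)
    (mem_bundle.mpr (by simp [finAlloc, hx])) (by simpa [finUtil] using hpos)

end Relabel

section HardInstance

variable (k a b n : ℕ)

/-- `2k` big goods, split as the `k + 1` that `hardAlloc` gives agent `0` and the other `k - 1`;
then `b - 1` small goods and one private good for each agent `j + 2`. -/
abbrev HardGood : Type := (Fin (k + 1) ⊕ Fin (k - 1)) ⊕ (Fin (b - 1) ⊕ Fin n)

def hardUtil (i : Fin (n + 2)) : HardGood k b n → ℕ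
  | .inl _ => if i = 0 then a else if i = 1 then b else 0
  | .inr (.inl _) => if i = 1 then 1 else 0
  | .inr (.inr j) => if i = j.succ.succ then 1 else 0

def hardAlloc : HardGood k b n → Fin (n + 2)
  | .inl (.inl _) => 0
  | .inl (.inr _) => 1
  | .inr (.inl _) => 1
  | .inr (.inr j) => j.succ.succ

def hardInstance : Fin (n + 2) → Fin (Fintype.card (HardGood k b n)) → ℝ :=
  finUtil fun i x => (hardUtil k a b n i x : ℝ)

lemma util_hardAlloc_zero_zero :
    util (hardInstance k a b n) 0 (bundle (finAlloc (hardAlloc k b n)) 0) = (k + 1) * a := by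
  simp [hardInstance, util_finUtil_bundle, Fintype.sum_sum_type, hardUtil, hardAlloc]

lemma util_hardAlloc_one_zero :
    util (hardInstance k a b n) 1 (bundle (finAlloc (hardAlloc k b n)) 0) = (k + 1) * b := by
  simp [hardInstance, util_finUtil_bundle, Fintype.sum_sum_type, hardUtil, hardAlloc]

lemma util_hardAlloc_one_one (hk : 0 < k) (hb : 0 < b) :
    util (hardInstance k a b n) 1 (bundle (finAlloc (hardAlloc k b n)) 1) = k * b - 1 := by
  simp only [hardInstance, hardUtil, util_finUtil_bundle, hardAlloc, one_ne_zero, ↓reduceIte,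
    Fintype.sum_sum_type, zero_ne_one, sum_const_zero, sum_const, card_univ, Fintype.card_fin,
    nsmul_eq_mul, Nat.cast_pred hk, zero_add, Nat.cast_one, Nat.cast_pred hb, mul_one,
    Fin.succ_succ_ne_one, add_zero]
  ring

lemma util_hardAlloc_succ_succ (i : Fin n) :
    util (hardInstance k a b n) i.succ.succ
      (bundle (finAlloc (hardAlloc k b n)) i.succ.succ) = 1 := by
  simp [hardInstance, util_finUtil_bundle, Fintype.sum_sum_type, hardUtil, hardAlloc,
    (Fin.succ_ne_zero _).symm, (Fin.succ_succ_ne_one _).symm]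

lemma hardAlloc_not_EF1 (hk : 0 < k) (hb : 0 < b) :
    ¬ EF1 (hardInstance k a b n) (finAlloc (hardAlloc k b n)) := by
  intro hEF1
  have hne : bundle (finAlloc (hardAlloc k b n)) 0 ≠ ∅ := by
    intro h
    have := util_hardAlloc_one_zero k a b n
    simp only [h, util, sum_empty] at this
    nlinarith [(Nat.one_le_cast (α := ℝ)).mpr hb]
  obtain ⟨g, hg, henvy⟩ := hEF1 1 0 hne
  have hgb : hardInstance k a b n 1 g ≤ b := by
    simp only [hardInstance, finUtil]
    generalize (Fintype.equivFin _).symm g = x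
    rcases x with (_ | _) | (_ | _) <;>
      simp [hardUtil, (Fin.succ_succ_ne_one _).symm, Nat.one_le_cast.mpr hb]
  rw [util_erase 1 hg, util_hardAlloc_one_zero, util_hardAlloc_one_one k a b n hk hb] at henvy
  linarith

def hardPosAlloc : HardGood k b n → Fin (n + 2)
  | .inl (.inl j) => if j = 0 then 0 else 1
  | x => hardAlloc k b n x

lemma hardInstance_nonneg (i : Fin (n + 2)) (g : Fin (Fintype.card (HardGood k b n))) :
    0 ≤ hardInstance k a b n i g :=
  Nat.cast_nonneg _

lemma hardInstance_integerValued : IntegerValued (hardInstance k a b n) :=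
  fun _ _ => ⟨_, rfl⟩

lemma hardInstance_positiveAdmitting (hk : 0 < k) (ha : 0 < a) (hb : 0 < b) :
    PositiveAdmitting (hardInstance k a b n) := by
  refine ⟨finAlloc (hardPosAlloc k b n), fun i => ?_⟩
  have hv : ∀ i x, (0 : ℝ) ≤ hardUtil k a b n i x := fun _ _ => Nat.cast_nonneg _
  refine Fin.cases ?_ (Fin.cases ?_ fun j => ?_) i
  · exact util_finUtil_bundle_pos hv (x := .inl (.inl 0)) (by simp [hardPosAlloc])
      (by simpa [hardUtil])
  · exact util_finUtil_bundle_pos hv (x := .inl (.inl ⟨1, by omega⟩))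
      (by simp [hardPosAlloc, Fin.ext_iff]) (by simpa [hardUtil])
  · exact util_finUtil_bundle_pos hv (x := .inr (.inr j)) (by simp [hardPosAlloc, hardAlloc])
      (by simp [hardUtil])

def hardBig : Finset (Fin (Fintype.card (HardGood k b n))) :=
  univ.filter fun g => ((Fintype.equivFin _).symm g).isLeft

lemma card_hardBig (hk : 0 < k) : #(hardBig k b n) = 2 * k := by
  rw [hardBig, card_filter,
    (Fintype.equivFin (HardGood k b n)).symm.sum_comp fun x => if x.isLeft then 1 else 0]
  simp only [Fintype.sum_sum_type, Sum.isLeft_inl, Sum.isLeft_inr, ↓reduceIte, Bool.false_eq_true,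
    sum_const, card_univ, Fintype.card_sum, Fintype.card_fin, smul_eq_mul, mul_one]
  omega

lemma hardInstance_of_mem_hardBig {g : Fin (Fintype.card (HardGood k b n))}
    (hg : g ∈ hardBig k b n) :
    hardInstance k a b n 0 g = a ∧ hardInstance k a b n 1 g = b := by
  simp only [hardBig, mem_filter, mem_univ, true_and] at hg
  simp only [hardInstance, finUtil]
  generalize (Fintype.equivFin _).symm g = x at hg
  rcases x with _ | _ <;> simp_all [hardUtil]

lemma util_compl_hardBig_zero : util (hardInstance k a b n) 0 (hardBig k b n)ᶜ = 0 := by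
  rw [hardBig, compl_filter, hardInstance,
    util_finUtil_filter _ _ fun x : HardGood k b n => ¬ x.isLeft]
  simp [Fintype.sum_sum_type, hardUtil, (Fin.succ_ne_zero _).symm]

lemma util_compl_hardBig_one (hb : 0 < b) :
    util (hardInstance k a b n) 1 (hardBig k b n)ᶜ = b - 1 := by
  rw [hardBig, compl_filter, hardInstance,
    util_finUtil_filter _ _ fun x : HardGood k b n => ¬ x.isLeft]
  simp [Fintype.sum_sum_type, hardUtil, (Fin.succ_succ_ne_one _).symm, Nat.cast_pred hb]

lemma util_hardInstance_le_of_EF1 (hk : 0 < k) (ha : 0 < a) (hb : 0 < b)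
    {B : Fin (Fintype.card (HardGood k b n)) → Fin (n + 2)} (hB : EF1 (hardInstance k a b n) B) :
    util (hardInstance k a b n) 0 (bundle B 0) ≤ k * a ∧
      util (hardInstance k a b n) 1 (bundle B 1) ≤ (k + 1) * b - 1 := by
  have hu := hardInstance_nonneg k a b n
  have hT := (card_hardBig k b n hk).le
  have h0 : ∀ g ∈ hardBig k b n, hardInstance k a b n 0 g = a :=
    fun g hg => (hardInstance_of_mem_hardBig k a b n hg).1
  have h1 : ∀ g ∈ hardBig k b n, hardInstance k a b n 1 g = b :=
    fun g hg => (hardInstance_of_mem_hardBig k a b n hg).2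
  have hc0 := hB.card_bundle_inter_le hu one_ne_zero hT h0
    (by rw [util_compl_hardBig_zero]; exact_mod_cast ha)
  have hc1 := hB.card_bundle_inter_le hu zero_ne_one hT h1
    (by rw [util_compl_hardBig_one k a b n hb]; linarith)
  constructor
  · calc util (hardInstance k a b n) 0 (bundle B 0)
        ≤ #(bundle B 0 ∩ hardBig k b n) * a + util (hardInstance k a b n) 0 (hardBig k b n)ᶜ :=
          util_le_card_inter_mul_add hu h0 _
      _ ≤ k * a := by rw [util_compl_hardBig_zero, add_zero]; gcongr
  · calc util (hardInstance k a b n) 1 (bundle B 1)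
        ≤ #(bundle B 1 ∩ hardBig k b n) * b + util (hardInstance k a b n) 1 (hardBig k b n)ᶜ :=
          util_le_card_inter_mul_add hu h1 _
      _ ≤ (k + 1) * b - 1 := by
          rw [util_compl_hardBig_one k a b n hb]
          have : (#(bundle B 1 ∩ hardBig k b n) : ℝ) ≤ k := by exact_mod_cast hc0
          nlinarith

lemma util_hardInstance_succ_succ_le (j : Fin n)
    (S : Finset (Fin (Fintype.card (HardGood k b n)))) :
    util (hardInstance k a b n) j.succ.succ S ≤ 1 := by
  refine (util_mono (hardInstance_nonneg k a b n) _ (subset_univ S)).trans_eq ?_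
  simp [hardInstance, util_finUtil_univ, Fintype.sum_sum_type, hardUtil, Fin.succ_succ_ne_one]

end HardInstance

section Welfare

variable {f : ℝ → EReal}

lemma welfare_eq_add_add {n m : ℕ} (u : Fin (n + 2) → Fin m → ℝ) (B : Fin m → Fin (n + 2)) :
    welfare f u B = f (util u 0 (bundle B 0)) + (f (util u 1 (bundle B 1)) +
      ∑ i : Fin n, f (util u i.succ.succ (bundle B i.succ.succ))) := by
  rw [welfare, Fin.sum_univ_succ, Fin.sum_univ_succ, Fin.succ_zero_eq_one]

variable {k a b n : ℕ}

lemma welfare_hardAlloc (hk : 0 < k) (hb : 0 < b) :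
    welfare f (hardInstance k a b n) (finAlloc (hardAlloc k b n)) =
      f ((k + 1) * a) + (f (k * b - 1) + n • f 1) := by
  simp [welfare_eq_add_add, util_hardAlloc_zero_zero, util_hardAlloc_one_one k a b n hk hb,
    util_hardAlloc_succ_succ]

lemma welfare_hardInstance_le_of_EF1 (hf : MonotoneOn f (Set.Ici 0)) (hk : 0 < k) (ha : 0 < a)
    (hb : 0 < b) {B : Fin (Fintype.card (HardGood k b n)) → Fin (n + 2)}
    (hB : EF1 (hardInstance k a b n) B) :
    welfare f (hardInstance k a b n) B ≤ f (k * a) + (f ((k + 1) * b - 1) + n • f 1) := by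
  have hu := util_nonneg (hardInstance_nonneg k a b n)
  have hb' : (1 : ℝ) ≤ b := Nat.one_le_cast.mpr hb
  obtain ⟨h0, h1⟩ := util_hardInstance_le_of_EF1 k a b n hk ha hb hB
  rw [welfare_eq_add_add]
  gcongr
  · exact hf (hu _ _) (Set.mem_Ici.mpr (by positivity)) h0
  · exact hf (hu _ _) (Set.mem_Ici.mpr (by nlinarith)) h1
  · rw [← Fin.sum_const]
    exact sum_le_sum fun j _ =>
      hf (hu _ _) (Set.mem_Ici.mpr zero_le_one) (util_hardInstance_succ_succ_le k a b n j _)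

end Welfare

lemma coe_sub_coe_lt_sub_of_add_lt_add {x z w c : ℝ} {y : EReal}
    (h : (x : EReal) + (y + c) < z + (w + c)) : (x : EReal) - z < w - y := by
  induction y using EReal.rec with
  | bot => rw [EReal.coe_sub_bot, ← EReal.coe_sub]; exact EReal.coe_lt_top _
  | coe y => norm_cast at h ⊢; linarith
  | top => simp at h

lemma exists_real_eq_of_strictMonoOn {f : ℝ → EReal} (hf : StrictMonoOn f (Set.Ici 0)) {x : ℝ}
    (hx : 0 < x) : ∃ r : ℝ, f x = r :=
  ⟨(f x).toReal, (EReal.coe_toReal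
    (ne_top_of_lt (hf (Set.mem_Ici.mpr hx.le) (Set.mem_Ici.mpr (by linarith)) (lt_add_one x)))
    (ne_bot_of_gt (hf Set.self_mem_Ici (Set.mem_Ici.mpr hx.le) hx))).symm⟩

theorem integer_general_necessary_general (n : ℕ) (hn : 2 ≤ n) (f : ℝ → EReal)
    (hfmono : StrictMonoOn f (Set.Ici (0 : ℝ)))
    (hEF1 : (∀ m : ℕ, ∀ u : Fin n → Fin m → ℝ, (∀ i g, 0 ≤ u i g) →
        IntegerValued u → PositiveAdmitting u →
        ∀ A : Fin m → Fin n, Chosen f u A → EF1 u A)) :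
    Cond6a f := by
  intro k a b hk ha hb
  obtain ⟨n, rfl⟩ : ∃ n', n = n' + 2 := ⟨n - 2, by omega⟩
  have hchosen := hEF1 _ (hardInstance k a b n) (hardInstance_nonneg k a b n)
    (hardInstance_integerValued k a b n) (hardInstance_positiveAdmitting k a b n hk ha hb)
  obtain ⟨B, hB⟩ := Finite.exists_max (welfare f (hardInstance k a b n))
  have hlt : welfare f (hardInstance k a b n) (finAlloc (hardAlloc k b n))
      < welfare f (hardInstance k a b n) B := by
    by_contra! hle
    exact hardAlloc_not_EF1 k a b n hk hb (hchosen _ fun C => (hB C).trans hle)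
  have key := (welfare_hardAlloc hk hb).symm.trans_lt
    (hlt.trans_le (welfare_hardInstance_le_of_EF1 hfmono.monotoneOn hk ha hb (hchosen B hB)))
  have hb' : (1 : ℝ) ≤ b := Nat.one_le_cast.mpr hb
  obtain ⟨x, hx⟩ := exists_real_eq_of_strictMonoOn hfmono (x := (k + 1) * a) (by positivity)
  obtain ⟨z, hz⟩ := exists_real_eq_of_strictMonoOn hfmono (x := k * a) (by positivity)
  obtain ⟨w, hw⟩ := exists_real_eq_of_strictMonoOn hfmono (x := (k + 1) * b - 1)
    (by nlinarith [(Nat.cast_pos (α := ℝ)).mpr hk])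
  obtain ⟨c, hc⟩ := exists_real_eq_of_strictMonoOn hfmono one_pos
  rw [hx, hz, hw, hc, ← EReal.coe_nsmul] at key
  rw [Delta, hx, hz, hw]
  exact coe_sub_coe_lt_sub_of_add_lt_add key

theorem integer_general_necessary (n : ℕ) (hn : 2 ≤ n) (f : ℝ → EReal)
    (hfmono : StrictMonoOn f (Set.Ici (0 : ℝ)))
    (hftop : ∀ x : ℝ, 0 ≤ x → f x ≠ ⊤)
    (hEF1 : (∀ m : ℕ, ∀ u : Fin n → Fin m → ℝ, (∀ i g, 0 ≤ u i g) →
        IntegerValued u → PositiveAdmitting u →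
        ∀ A : Fin m → Fin n, Chosen f u A → EF1 u A)) :
    Cond6a f :=
  integer_general_necessary_general n hn f hfmono hEF1

end FairDiv
end
end
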